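/- arXiv:1404.0598 — 2 statements merged into one kernel-verified Lean document; each statement's English description precedes it below -/
import Mathlib

section
/- Let N ≥ 1 and n ≥ 2 be integers. Let A be an N×N matrix with entries in ℂ((t)) such that A.coeff m = 0 for all m < −n and such that the polar part A.coeff(−n) is a non-nilpotent complex N×N matrix. Then for every invertible N×N matrix g over ℂ((t)), the gauge transform B = g·A·g⁻¹ − g′·g⁻¹ again has order of singularity at least n; that is, there exists an integer m ≤ −n and indices i, j with (B i j).coeff m ≠ 0. (This is the paper's Lemma 'order of singularity', in the vector-bundle/GL_N case to which the paper reduces slope computations via faithful representations.) -/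
/-!
If the gauge transform `B` had a pole of order at most `n - 1`, then `∇_B = ∂ₜ + B` would lower
the `t`-adic order of a matrix by at most `n - 1` (for `∂ₜ` this uses `n ≥ 2`), so the order of
`∇_B^k g` decreases at most like `-k (n - 1)`. On the other hand `∇_A^k 1` has leading term
`P^k t^(-k n)`, where `P = A.coeff (-n)`. The gauge relation says exactly that
`∇_A (g⁻¹ Y) = g⁻¹ ∇_B Y`, so `∇_A^k 1 = g⁻¹ ∇_B^k g`, and comparing orders forces `P^k = 0`
for large `k`.
-/

open scoped Classical

/-- The formal derivative of a formal Laurent series: `f′.coeff m = (m+1) • f.coeff (m+1)`. -/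
noncomputable def lderiv (f : LaurentSeries ℂ) : LaurentSeries ℂ where
  coeff m := ((m + 1 : ℤ) : ℂ) * f.coeff (m + 1)
  isPWO_support' := by
    have h : (Function.support fun m : ℤ => ((m + 1 : ℤ) : ℂ) * f.coeff (m + 1)) ⊆
        (fun m : ℤ => m - 1) '' f.support := by
      intro m hm
      have : f.coeff (m + 1) ≠ 0 := by
        intro h0
        apply hm
        simp [Function.mem_support, h0]
      exact ⟨m + 1, this, by ring⟩
    exact (f.isPWO_support.image_of_monotone fun a b hab => by omega).mono h

/-- The matrix of `m`-th coefficients of a matrix of Laurent series. -/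
noncomputable def mcoeff {N : ℕ} (A : Matrix (Fin N) (Fin N) (LaurentSeries ℂ)) (m : ℤ) :
    Matrix (Fin N) (Fin N) ℂ :=
  Matrix.of fun i j => (A i j).coeff m

/-- Entrywise formal derivative of a matrix of Laurent series. -/
noncomputable def mderiv {N : ℕ} (A : Matrix (Fin N) (Fin N) (LaurentSeries ℂ)) :
    Matrix (Fin N) (Fin N) (LaurentSeries ℂ) :=
  A.map lderiv
namespace LaurentSeries

/-- The Euler operator `t ∂ₜ`: unlike `∂ₜ` it does not shift exponents, which makes its Leibniz
rule a direct computation. -/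
noncomputable def euler (f : LaurentSeries ℂ) : LaurentSeries ℂ where
  coeff m := (m : ℂ) * f.coeff m
  isPWO_support' := f.isPWO_support.mono fun m hm h0 => hm (by simp only [h0, mul_zero])

@[simp] lemma euler_coeff (f : LaurentSeries ℂ) (m : ℤ) : (euler f).coeff m = m * f.coeff m := rfl

lemma support_euler_subset (f : LaurentSeries ℂ) : (euler f).support ⊆ f.support :=
  fun m hm h0 => hm (by rw [euler_coeff, h0, mul_zero])

lemma euler_mul (f g : LaurentSeries ℂ) : euler (f * g) = euler f * g + f * euler g := by
  ext m
  rw [HahnSeries.coeff_add, HahnSeries.coeff_mul_left' f.isPWO_support (support_euler_subset f),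
    HahnSeries.coeff_mul_right' g.isPWO_support (support_euler_subset g), euler_coeff,
    HahnSeries.coeff_mul, Finset.mul_sum, ← Finset.sum_add_distrib]
  refine Finset.sum_congr rfl fun ij hij => ?_
  obtain ⟨-, -, hsum⟩ := Finset.mem_antidiagonal.mp hij
  simp only [euler_coeff, ← hsum, Int.cast_add]
  ring

lemma lderiv_eq_single_mul_euler (f : LaurentSeries ℂ) :
    lderiv f = HahnSeries.single (-1) 1 * euler f := by
  ext m
  rw [HahnSeries.coeff_single_mul, sub_neg_eq_add, one_mul, euler_coeff]
  rfl

lemma lderiv_mul (f g : LaurentSeries ℂ) : lderiv (f * g) = lderiv f * g + f * lderiv g := by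
  simp only [lderiv_eq_single_mul_euler, euler_mul]
  ring

lemma lderiv_sum {ι : Type*} (s : Finset ι) (f : ι → LaurentSeries ℂ) :
    lderiv (∑ k ∈ s, f k) = ∑ k ∈ s, lderiv (f k) := by
  ext m
  simp only [lderiv, HahnSeries.coeff_sum, Finset.mul_sum]

variable {R : Type*} [Semiring R] {f g : LaurentSeries R} {p q : ℤ}

lemma coeff_mul_coeff_eq_zero (hf : ∀ a < p, f.coeff a = 0) (hg : ∀ b < q, g.coeff b = 0)
    {a b : ℤ} (hab : a + b ≤ p + q) (hne : (a, b) ≠ (p, q)) : f.coeff a * g.coeff b = 0 := by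
  rcases lt_or_ge a p with ha | ha
  · rw [hf a ha, zero_mul]
  rcases lt_or_ge b q with hb | hb
  · rw [hg b hb, mul_zero]
  exact absurd (Prod.ext (by omega) (by omega)) hne

lemma coeff_mul_eq_zero_of_lt (hf : ∀ a < p, f.coeff a = 0) (hg : ∀ b < q, g.coeff b = 0)
    {m : ℤ} (hm : m < p + q) : (f * g).coeff m = 0 := by
  rw [HahnSeries.coeff_mul]
  refine Finset.sum_eq_zero fun ij hij => ?_
  obtain ⟨-, -, hsum⟩ := Finset.mem_antidiagonal.mp hij
  exact coeff_mul_coeff_eq_zero hf hg (by omega) fun h => by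
    rw [Prod.ext_iff] at h
    omega

lemma coeff_mul_add_eq (hf : ∀ a < p, f.coeff a = 0) (hg : ∀ b < q, g.coeff b = 0) :
    (f * g).coeff (p + q) = f.coeff p * g.coeff q := by
  rw [HahnSeries.coeff_mul]
  refine Finset.sum_eq_single (p, q) (fun ij hij hne => ?_) fun hpq => ?_
  · obtain ⟨-, -, hsum⟩ := Finset.mem_antidiagonal.mp hij
    exact coeff_mul_coeff_eq_zero hf hg hsum.le hne
  · by_contra hne
    exact hpq (Finset.mem_antidiagonal.mpr
      ⟨left_ne_zero_of_mul hne, right_ne_zero_of_mul hne, rfl⟩)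

end LaurentSeries

section Matrix

variable {N : ℕ}

lemma mcoeff_apply (X : Matrix (Fin N) (Fin N) (LaurentSeries ℂ)) (m : ℤ) (i j : Fin N) :
    mcoeff X m i j = (X i j).coeff m := rfl

lemma mcoeff_add (X Y : Matrix (Fin N) (Fin N) (LaurentSeries ℂ)) (m : ℤ) :
    mcoeff (X + Y) m = mcoeff X m + mcoeff Y m := by
  ext i j
  simp [mcoeff_apply]

lemma mcoeff_one_zero : mcoeff (1 : Matrix (Fin N) (Fin N) (LaurentSeries ℂ)) 0 = 1 := by
  ext i j
  by_cases h : i = j <;> simp [mcoeff_apply, Matrix.one_apply, h]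

lemma mderiv_mul (X Y : Matrix (Fin N) (Fin N) (LaurentSeries ℂ)) :
    mderiv (X * Y) = mderiv X * Y + X * mderiv Y := by
  ext i j
  simp only [mderiv, Matrix.map_apply, Matrix.mul_apply, Matrix.add_apply,
    LaurentSeries.lderiv_sum, LaurentSeries.lderiv_mul, Finset.sum_add_distrib]

lemma mderiv_one : mderiv (1 : Matrix (Fin N) (Fin N) (LaurentSeries ℂ)) = 0 := by
  simpa using mderiv_mul (1 : Matrix (Fin N) (Fin N) (LaurentSeries ℂ)) 1

lemma mderiv_nonsing_inv {g : Matrix (Fin N) (Fin N) (LaurentSeries ℂ)} (hg : IsUnit g) :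
    mderiv g⁻¹ = -(g⁻¹ * mderiv g * g⁻¹) := by
  have hdet := (Matrix.isUnit_iff_isUnit_det g).mp hg
  have h := mderiv_mul g⁻¹ g
  rw [Matrix.nonsing_inv_mul g hdet, mderiv_one, eq_comm, add_eq_zero_iff_eq_neg] at h
  calc mderiv g⁻¹ = mderiv g⁻¹ * g * g⁻¹ := (Matrix.mul_nonsing_inv_cancel_right g _ hdet).symm
    _ = -(g⁻¹ * mderiv g * g⁻¹) := by rw [h, Matrix.neg_mul]

def VanishesBelow (c : ℤ) (X : Matrix (Fin N) (Fin N) (LaurentSeries ℂ)) : Prop :=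
  ∀ m < c, mcoeff X m = 0

namespace VanishesBelow

variable {b c : ℤ} {X Y : Matrix (Fin N) (Fin N) (LaurentSeries ℂ)}

lemma coeff_eq_zero (hX : VanishesBelow c X) {m : ℤ} (hm : m < c) (i j : Fin N) :
    (X i j).coeff m = 0 := by
  rw [← mcoeff_apply, hX m hm, Matrix.zero_apply]

lemma of_coeff (h : ∀ m < c, ∀ i j, (X i j).coeff m = 0) : VanishesBelow c X :=
  fun m hm => by ext i j; exact h m hm i j

lemma mono (hX : VanishesBelow c X) (h : b ≤ c) : VanishesBelow b X :=
  fun m hm => hX m (hm.trans_le h)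

lemma add (hX : VanishesBelow c X) (hY : VanishesBelow c Y) : VanishesBelow c (X + Y) :=
  fun m hm => by rw [mcoeff_add, hX m hm, hY m hm, add_zero]

lemma mul (hX : VanishesBelow b X) (hY : VanishesBelow c Y) : VanishesBelow (b + c) (X * Y) :=
  of_coeff fun _ hm i j => by
    rw [Matrix.mul_apply, HahnSeries.coeff_sum]
    exact Finset.sum_eq_zero fun k _ =>
      LaurentSeries.coeff_mul_eq_zero_of_lt (fun _ ha => hX.coeff_eq_zero ha i k)
        (fun _ ha => hY.coeff_eq_zero ha k j) hm

lemma mcoeff_mul (hX : VanishesBelow b X) (hY : VanishesBelow c Y) :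
    mcoeff (X * Y) (b + c) = mcoeff X b * mcoeff Y c := by
  ext i j
  simp only [mcoeff_apply, Matrix.mul_apply, HahnSeries.coeff_sum]
  exact Finset.sum_congr rfl fun k _ =>
    LaurentSeries.coeff_mul_add_eq (fun _ ha => hX.coeff_eq_zero ha i k)
      (fun _ ha => hY.coeff_eq_zero ha k j)

lemma mderiv (hX : VanishesBelow c X) : VanishesBelow (c - 1) (mderiv X) :=
  of_coeff fun m hm i j => by
    change _ * _ = 0
    rw [hX.coeff_eq_zero (by omega), mul_zero]

end VanishesBelow

lemma vanishesBelow_one : VanishesBelow 0 (1 : Matrix (Fin N) (Fin N) (LaurentSeries ℂ)) :=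
  .of_coeff fun m hm i j => by
    by_cases h : i = j <;> simp [Matrix.one_apply, h, HahnSeries.coeff_one, hm.ne]

lemma exists_vanishesBelow (X : Matrix (Fin N) (Fin N) (LaurentSeries ℂ)) :
    ∃ c, VanishesBelow c X := by
  obtain ⟨c, hc⟩ := Finite.exists_ge fun p : Fin N × Fin N => (X p.1 p.2).order
  exact ⟨c, .of_coeff fun m hm i j =>
    HahnSeries.coeff_eq_zero_of_lt_order (hm.trans_le (hc (i, j)))⟩

noncomputable def nabla (C X : Matrix (Fin N) (Fin N) (LaurentSeries ℂ)) :
    Matrix (Fin N) (Fin N) (LaurentSeries ℂ) :=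
  mderiv X + C * X

lemma semiconj_nabla_of_gauge {A B g : Matrix (Fin N) (Fin N) (LaurentSeries ℂ)} (hg : IsUnit g)
    (hB : B = g * A * g⁻¹ - mderiv g * g⁻¹) :
    Function.Semiconj (g⁻¹ * ·) (nabla B) (nabla A) := by
  intro Y
  have hdet := (Matrix.isUnit_iff_isUnit_det g).mp hg
  simp only [nabla, mderiv_mul, mderiv_nonsing_inv hg, hB, mul_add, Matrix.sub_mul, mul_sub,
    ← mul_assoc, Matrix.nonsing_inv_mul g hdet, one_mul, Matrix.neg_mul]
  abel

lemma nabla_iterate_one_eq {A B g : Matrix (Fin N) (Fin N) (LaurentSeries ℂ)} (hg : IsUnit g)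
    (hB : B = g * A * g⁻¹ - mderiv g * g⁻¹) (k : ℕ) :
    (nabla A)^[k] 1 = g⁻¹ * (nabla B)^[k] g := by
  rw [← Matrix.nonsing_inv_mul g ((Matrix.isUnit_iff_isUnit_det g).mp hg)]
  exact ((semiconj_nabla_of_gauge hg hB).iterate_right k g).symm

namespace VanishesBelow

variable {c s : ℤ} {C X : Matrix (Fin N) (Fin N) (LaurentSeries ℂ)}

lemma nabla (hX : VanishesBelow c X) (hC : VanishesBelow (-s) C) (hs : 1 ≤ s) :
    VanishesBelow (c - s) (nabla C X) :=
  (hX.mderiv.mono (by omega)).add (by simpa only [neg_add_eq_sub] using hC.mul hX)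

lemma nabla_iterate (hX : VanishesBelow c X) (hC : VanishesBelow (-s) C) (hs : 1 ≤ s) (k : ℕ) :
    VanishesBelow (c - k * s) ((_root_.nabla C)^[k] X) := by
  induction k with
  | zero => simpa using hX
  | succ k ih =>
    rw [Function.iterate_succ_apply', Nat.cast_succ, add_mul, one_mul, ← sub_sub]
    exact ih.nabla hC hs

lemma mcoeff_nabla (hX : VanishesBelow c X) (hC : VanishesBelow (-s) C) (hs : 2 ≤ s) :
    mcoeff (_root_.nabla C X) (c - s) = mcoeff C (-s) * mcoeff X c := by
  rw [_root_.nabla, mcoeff_add, hX.mderiv _ (by omega), zero_add, ← neg_add_eq_sub,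
    hC.mcoeff_mul hX]

lemma nabla_iterate_one (hC : VanishesBelow (-s) C) (hs : 2 ≤ s) (k : ℕ) :
    VanishesBelow (-(k * s)) ((_root_.nabla C)^[k] 1) ∧
      mcoeff ((_root_.nabla C)^[k] 1) (-(k * s)) = mcoeff C (-s) ^ k := by
  induction k with
  | zero => simpa using ⟨vanishesBelow_one, mcoeff_one_zero⟩
  | succ k ih =>
    rw [Function.iterate_succ_apply', pow_succ', Nat.cast_succ,
      show -((k + 1) * s) = -(k * s) - s by ring]
    exact ⟨ih.1.nabla hC (by omega), by rw [ih.1.mcoeff_nabla hC hs, ih.2]⟩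

end VanishesBelow

theorem isNilpotent_polarPart_of_gauge {n : ℤ} (hn : 2 ≤ n)
    {A B g : Matrix (Fin N) (Fin N) (LaurentSeries ℂ)} (hA : VanishesBelow (-n) A) (hg : IsUnit g)
    (hB : B = g * A * g⁻¹ - mderiv g * g⁻¹) (hBv : VanishesBelow (-(n - 1)) B) :
    IsNilpotent (mcoeff A (-n)) := by
  obtain ⟨c, hc⟩ := exists_vanishesBelow g
  obtain ⟨c', hc'⟩ := exists_vanishesBelow g⁻¹
  obtain ⟨k, hk⟩ : ∃ k : ℕ, -(c + c') < k := ⟨(-(c + c')).toNat + 1, by omega⟩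
  have hvan : VanishesBelow (c' + (c - k * (n - 1))) ((nabla A)^[k] 1) := by
    rw [nabla_iterate_one_eq hg hB]
    exact hc'.mul (hc.nabla_iterate hBv (by omega) k)
  refine ⟨k, ?_⟩
  rw [← (hA.nabla_iterate_one hn k).2]
  have hkn : (k : ℤ) * (n - 1) = k * n - k := by ring
  exact hvan _ (by omega)

end Matrix

theorem order_of_singularity_preserved_general
    (N : ℕ) (n : ℤ) (hn : 2 ≤ n)
    (A : Matrix (Fin N) (Fin N) (LaurentSeries ℂ))
    (hA : ∀ m : ℤ, m < -n → mcoeff A m = 0)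
    (hnonnilp : ¬ IsNilpotent (mcoeff A (-n)))
    (g : Matrix (Fin N) (Fin N) (LaurentSeries ℂ)) (hg : IsUnit g)
    (B : Matrix (Fin N) (Fin N) (LaurentSeries ℂ))
    (hB : B = g * A * g⁻¹ - (mderiv g) * g⁻¹) :
    ∃ m : ℤ, m ≤ -n ∧ ∃ i j : Fin N, (B i j).coeff m ≠ 0 := by
  by_contra! hcon
  exact hnonnilp <| isNilpotent_polarPart_of_gauge hn hA hg hB
    (.of_coeff fun m hm => hcon m (by omega))

/-- **Lemma (order of singularity).** If `∂ₜ + A` has order of singularity `n ≥ 2` and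
non-nilpotent polar part `A.coeff (-n)`, then every gauge transform
`B = g A g⁻¹ - g′ g⁻¹` by an invertible loop-group element `g` again has order of
singularity at least `n`. -/
theorem order_of_singularity_preserved
    (N : ℕ) (hN : 1 ≤ N) (n : ℤ) (hn : 2 ≤ n)
    (A : Matrix (Fin N) (Fin N) (LaurentSeries ℂ))
    (hA : ∀ m : ℤ, m < -n → mcoeff A m = 0)
    (hnonnilp : ¬ IsNilpotent (mcoeff A (-n)))
    (g : Matrix (Fin N) (Fin N) (LaurentSeries ℂ)) (hg : IsUnit g)
    (B : Matrix (Fin N) (Fin N) (LaurentSeries ℂ))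
    (hB : B = g * A * g⁻¹ - (mderiv g) * g⁻¹) :
    ∃ m : ℤ, m ≤ -n ∧ ∃ i j : Fin N, (B i j).coeff m ≠ 0 :=
  order_of_singularity_preserved_general N n hn A hA hnonnilp g hg B hB
end

section
/- Let a and r be real numbers with r ≥ 0. Let f and g be formal Laurent series over ℂ such that f.coeff m = 0 for all integers m < 1 − ⌈a − r⌉ and g.coeff m = 0 for all integers m < 1 − ⌈−a − r⌉. Then the residue of f·dg vanishes: (f · g′).coeff(−1) = 0. (This is the computation proving the paper's Lemma 3.1, that the Kac–Moody 2-cocycle (x⊗f, y⊗g) ↦ −κ(x,y)·Res(f dg) vanishes on the Moy–Prasad subalgebra 𝔤_{x,r⁺} = ⊕_α 𝔲_α(𝒫^{1−⌈α(x)−r⌉}), so that the central extension splits over 𝔤_{x,r⁺}; here a plays the role of α(x).) -/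
open scoped Classical

/-- If `f.coeff m = 0` for `m < 1 - ⌈a - r⌉` and `g.coeff m = 0` for `m < 1 - ⌈-a - r⌉`
(with `r ≥ 0`), then `Res (f dg) = (f · g′).coeff (-1) = 0`.  This computation proves
that the Kac–Moody 2-cocycle vanishes on the Moy–Prasad subalgebra `𝔤_{x,r⁺}`. -/
theorem residue_vanishes_on_moy_prasad
    (a r : ℝ) (hr : 0 ≤ r) (f g : LaurentSeries ℂ)
    (hf : ∀ m : ℤ, m < 1 - ⌈a - r⌉ → f.coeff m = 0)
    (hg : ∀ m : ℤ, m < 1 - ⌈-a - r⌉ → g.coeff m = 0) :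
    (f * lderiv g).coeff (-1) = 0 := by
  rw [HahnSeries.coeff_mul]
  apply Finset.sum_eq_zero
  rintro ⟨k, l⟩ hkl
  rw [Finset.mem_addAntidiagonal] at hkl
  obtain ⟨hk, hl, hsum⟩ := hkl
  exfalso
  have hk' : ¬ k < 1 - ⌈a - r⌉ := fun h => hk (hf k h)
  have hgl : g.coeff (l + 1) ≠ 0 := by
    intro h0
    apply hl
    show ((l + 1 : ℤ) : ℂ) * g.coeff (l + 1) = 0
    rw [h0, mul_zero]
  have hl' : ¬ l + 1 < 1 - ⌈-a - r⌉ := fun h => hgl (hg _ h)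
  have h1 : ⌈a - r⌉ ≤ ⌈a⌉ := Int.ceil_le_ceil (by linarith)
  have h2 : ⌈-a - r⌉ ≤ ⌈-a⌉ := Int.ceil_le_ceil (by linarith)
  have h3 : ⌈-a⌉ = -⌊a⌋ := Int.ceil_neg
  have h4 : ⌈a⌉ ≤ ⌊a⌋ + 1 := Int.ceil_le_floor_add_one a
  omega
end
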